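/- The function K̂_ℓ(z,w) = (1/((ℓ+d-1)·(ℓ-1)!))·⟨z,w⟩^{ℓ-1}·(((ℓ+d-1)/ℓ)·⟨z,w⟩ I_d − z w̄ᵀ) is the reproducing kernel of the subspace V̂_ℓ = {f ∈ ℂ^d ⊗ P_ℓ : Σᵢ ∂ᵢfᵢ = 0} of the Fischer-Fock space: K̂_ℓ(·,w)ζ ∈ V̂_ℓ for all w, ζ ∈ ℂ^d, and ⟨f, K̂_ℓ(·,w)ζ⟩_{F_ℓ} = ⟨f(w), ζ⟩ for all f ∈ V̂_ℓ. -/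

import Mathlib

/-!
Multiplication by `z_j` is adjoint to `∂_j` for the Fischer-Fock product, since
`(α + e_j)! = (α_j + 1) α!`. Together with Euler's identity `∑ z_j ∂_j p = n p` this gives
`⟨p, ⟨·,w⟩^n⟩ = n! p(w)` for `p ∈ P_n`. Pairing `f` with the kernel, the term `z_j ⟨z,w⟩^m`
therefore contributes `(∂_j f_j)(w)`, which sums to zero because `f` is divergence free, and the
normalising constant turns what is left into `∑ f_j(w) conj ζ_j`. The kernel is divergence free by Euler's identity again,
`∑ ∂_j (z_j p) = (d + n) p`, which is what the factor `(ℓ + d - 1)/ℓ` balances.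
-/

open MvPolynomial
open scoped ComplexConjugate

/-- The Fischer-Fock inner product on polynomials in `d` complex variables, determined by
`⟨z^α, z^β⟩_F = α! δ_{α,β}`. -/
noncomputable def fock (d : ℕ) (p q : MvPolynomial (Fin d) ℂ) : ℂ :=
  ∑ α ∈ p.support ∪ q.support,
    ((∏ i, (α i).factorial : ℕ) : ℂ) * p.coeff α * conj (q.coeff α)

open Finset

section Polynomial

variable {σ R : Type*} [Fintype σ] [CommSemiring R]

theorem sum_pderiv_X_mul {n : ℕ} {p : MvPolynomial σ R} (hp : p.IsHomogeneous n) :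
    ∑ j, pderiv j (X j * p) = C ((Fintype.card σ + n : ℕ) : R) * p := by
  rw [map_natCast]
  simp only [pderiv_mul, pderiv_X_self, one_mul, sum_add_distrib, hp.sum_X_mul_pderiv,
    sum_const, card_univ, nsmul_eq_mul, Nat.cast_add, add_mul]

theorem prod_factorial_add_single (β : σ →₀ ℕ) (j : σ) :
    ∏ i, ((β + Finsupp.single j 1 : σ →₀ ℕ) i).factorial
      = (β j + 1) * ∏ i, (β i).factorial := by
  classical
  have step : ∀ i, ((β + Finsupp.single j 1 : σ →₀ ℕ) i).factorial
      = (if j = i then β j + 1 else 1) * (β i).factorial := by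
    intro i
    rcases eq_or_ne j i with rfl | h
    · simp [Nat.factorial_succ]
    · simp [h]
  rw [prod_congr rfl fun i _ => step i, prod_mul_distrib, prod_ite_eq]
  simp

noncomputable def innerPoly (w : σ → ℂ) : MvPolynomial σ ℂ :=
  ∑ k, C (conj (w k)) * X k

theorem isHomogeneous_innerPoly_pow (w : σ → ℂ) (n : ℕ) :
    (innerPoly w ^ n).IsHomogeneous n := by
  simpa [innerPoly] using
    (IsHomogeneous.sum _ _ 1 fun k _ => isHomogeneous_C_mul_X (conj (w k)) k).pow n

theorem innerPoly_pow_succ (w : σ → ℂ) (n : ℕ) :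
    innerPoly w ^ (n + 1) = ∑ k, C (conj (w k)) * (X k * innerPoly w ^ n) := by
  simp only [pow_succ', innerPoly, sum_mul, mul_assoc]

theorem pderiv_innerPoly (w : σ → ℂ) (j : σ) : pderiv j (innerPoly w) = C (conj (w j)) := by
  classical
  simp [innerPoly, pderiv_X, Pi.single_apply]

theorem sum_C_mul_pderiv_innerPoly_pow (w ζ : σ → ℂ) (n : ℕ) :
    ∑ j, C (ζ j) * pderiv j (innerPoly w ^ (n + 1))
      = C (((n + 1 : ℕ) : ℂ) * ∑ j, conj (w j) * ζ j) * innerPoly w ^ n := by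
  simp only [pderiv_pow, pderiv_innerPoly, Nat.add_sub_cancel, map_mul, map_sum, mul_sum,
    sum_mul, map_natCast]
  refine sum_congr rfl fun j _ => ?_
  ring

end Polynomial

section Fock

variable {d : ℕ}

theorem fock_eq_sum_of_subset (p : MvPolynomial (Fin d) ℂ) {q : MvPolynomial (Fin d) ℂ}
    {T : Finset (Fin d →₀ ℕ)} (hT : q.support ⊆ T) :
    fock d p q = ∑ α ∈ T, ((∏ i, (α i).factorial : ℕ) : ℂ) * p.coeff α * conj (q.coeff α) := by
  have hvanish : ∀ α ∉ q.support,
      ((∏ i, (α i).factorial : ℕ) : ℂ) * p.coeff α * conj (q.coeff α) = 0 := fun α hα => by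
    simp [notMem_support_iff.mp hα]
  rw [fock, ← sum_subset subset_union_right fun α _ => hvanish α,
    sum_subset hT fun α _ => hvanish α]

theorem fock_add_right (p q r : MvPolynomial (Fin d) ℂ) :
    fock d p (q + r) = fock d p q + fock d p r := by
  classical
  rw [fock_eq_sum_of_subset p support_add, fock_eq_sum_of_subset p subset_union_left,
    fock_eq_sum_of_subset p subset_union_right, ← sum_add_distrib]
  simp only [coeff_add, map_add, mul_add]

theorem fock_smul_right (p : MvPolynomial (Fin d) ℂ) (a : ℂ) (q : MvPolynomial (Fin d) ℂ) :
    fock d p (a • q) = conj a * fock d p q := by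
  rw [fock_eq_sum_of_subset p support_smul, fock_eq_sum_of_subset p subset_rfl, mul_sum]
  refine sum_congr rfl fun α _ => ?_
  rw [coeff_smul, smul_eq_mul, map_mul]
  ring

noncomputable def fockRight (p : MvPolynomial (Fin d) ℂ) : MvPolynomial (Fin d) ℂ →ₗ⋆[ℂ] ℂ where
  toFun := fock d p
  map_add' := fock_add_right p
  map_smul' := fock_smul_right p

theorem fock_sum_right {ι : Type*} (p : MvPolynomial (Fin d) ℂ) (s : Finset ι)
    (q : ι → MvPolynomial (Fin d) ℂ) : fock d p (∑ i ∈ s, q i) = ∑ i ∈ s, fock d p (q i) :=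
  map_sum (fockRight p) q s

theorem fock_sub_right (p q r : MvPolynomial (Fin d) ℂ) :
    fock d p (q - r) = fock d p q - fock d p r :=
  map_sub (fockRight p) q r

theorem fock_C_mul_right (p : MvPolynomial (Fin d) ℂ) (a : ℂ) (q : MvPolynomial (Fin d) ℂ) :
    fock d p (C a * q) = conj a * fock d p q := by
  rw [C_mul', fock_smul_right]

theorem fock_one_right (p : MvPolynomial (Fin d) ℂ) : fock d p 1 = p.coeff 0 := by
  rw [fock_eq_sum_of_subset p support_one.subset, sum_singleton]
  simp

theorem fock_X_mul_right (p q : MvPolynomial (Fin d) ℂ) (j : Fin d) :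
    fock d p (X j * q) = fock d (pderiv j p) q := by
  rw [fock_eq_sum_of_subset p subset_rfl, fock_eq_sum_of_subset _ subset_rfl,
    support_X_mul, sum_map]
  refine sum_congr rfl fun β _ => ?_
  rw [addLeftEmbedding_apply, coeff_X_mul, coeff_pderiv, add_comm _ β,
    prod_factorial_add_single]
  push_cast
  ring

theorem fock_innerPoly_pow (w : Fin d → ℂ) {n : ℕ} {p : MvPolynomial (Fin d) ℂ}
    (hp : p.IsHomogeneous n) : fock d p (innerPoly w ^ n) = n.factorial * eval w p := by
  induction n generalizing p with
  | zero =>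
    rw [totalDegree_eq_zero_iff_eq_C.mp ((totalDegree_zero_iff_isHomogeneous _).mpr hp)]
    simp [fock_one_right]
  | succ n ih =>
    have euler := congrArg (eval w) hp.sum_X_mul_pderiv
    simp only [map_sum, map_mul, eval_X, nsmul_eq_mul, map_natCast] at euler
    calc fock d p (innerPoly w ^ (n + 1))
        = ∑ k, w k * fock d (pderiv k p) (innerPoly w ^ n) := by
          simp only [innerPoly_pow_succ, fock_sum_right, fock_C_mul_right, fock_X_mul_right,
            Complex.conj_conj]
      _ = n.factorial * ∑ k, w k * eval w (pderiv k p) := by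
          rw [mul_sum]
          refine sum_congr rfl fun k _ => ?_
          rw [ih (by simpa using hp.pderiv)]
          ring
      _ = (n + 1).factorial * eval w p := by
          rw [euler, Nat.factorial_succ]
          push_cast
          ring

end Fock

section Kernel

variable {d : ℕ} (a b : ℂ) (n : ℕ) (w ζ : Fin d → ℂ)

/-- Component `j` of `K(·,w) ζ` for `K(z,w) = ⟨z,w⟩^n (a ⟨z,w⟩ I - b z w̄ᵀ)`. -/
noncomputable def kernelField (j : Fin d) : MvPolynomial (Fin d) ℂ :=
  C a * (C (ζ j) * innerPoly w ^ (n + 1))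
    - C (b * ∑ i, conj (w i) * ζ i) * (X j * innerPoly w ^ n)

theorem isHomogeneous_kernelField (j : Fin d) :
    (kernelField a b n w ζ j).IsHomogeneous (n + 1) := by
  have hX : (X j * innerPoly w ^ n).IsHomogeneous (n + 1) :=
    add_comm 1 n ▸ (isHomogeneous_X ℂ j).mul (isHomogeneous_innerPoly_pow w n)
  exact (((isHomogeneous_innerPoly_pow w _).C_mul _).C_mul _).sub (hX.C_mul _)

theorem sum_pderiv_kernelField :
    ∑ j, pderiv j (kernelField a b n w ζ j)
      = C ((a * (n + 1) - b * (d + n)) * ∑ i, conj (w i) * ζ i) * innerPoly w ^ n := by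
  simp only [kernelField, map_sub, pderiv_C_mul, sum_sub_distrib, ← mul_sum]
  rw [sum_C_mul_pderiv_innerPoly_pow, sum_pderiv_X_mul (isHomogeneous_innerPoly_pow w n),
    Fintype.card_fin]
  simp only [map_mul, map_sub, map_add, map_natCast, map_one, Nat.cast_add, Nat.cast_one]
  ring

theorem sum_fock_kernelField {f : Fin d → MvPolynomial (Fin d) ℂ}
    (hf : ∀ j, (f j).IsHomogeneous (n + 1)) (hdiv : ∑ j, pderiv j (f j) = 0) :
    ∑ j, fock d (f j) (kernelField a b n w ζ j)
      = conj a * (n + 1).factorial * ∑ j, eval w (f j) * conj (ζ j) := by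
  set c := ∑ i, conj (w i) * ζ i
  have hterm : ∀ j, fock d (f j) (kernelField a b n w ζ j)
      = conj a * (n + 1).factorial * (eval w (f j) * conj (ζ j))
        - conj (b * c) * n.factorial * eval w (pderiv j (f j)) := fun j => by
    rw [kernelField, fock_sub_right, fock_C_mul_right, fock_C_mul_right, fock_C_mul_right,
      fock_X_mul_right, fock_innerPoly_pow w (hf j),
      fock_innerPoly_pow w (by simpa using (hf j).pderiv)]
    ring
  have hvanish : ∑ j, conj (b * c) * n.factorial * eval w (pderiv j (f j)) = 0 := by
    rw [← mul_sum, ← map_sum, hdiv, map_zero, mul_zero]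
  rw [sum_congr rfl fun j _ => hterm j, sum_sub_distrib, hvanish, sub_zero, mul_sum]

end Kernel

/-- `K̂_ℓ(z,w) = (1/((ℓ+d-1)(ℓ-1)!)) ⟨z,w⟩^{ℓ-1} (((ℓ+d-1)/ℓ)⟨z,w⟩ I_d − z w̄ᵀ)`
(here `ℓ = m+1`) is the reproducing kernel of `V̂_ℓ = {f ∈ ℂ^d ⊗ P_ℓ : Σᵢ ∂ᵢ fᵢ = 0}`:
each `K̂_ℓ(·,w)ζ` lies in `V̂_ℓ`, and `⟨f, K̂_ℓ(·,w)ζ⟩ = ⟨f(w), ζ⟩` for all `f ∈ V̂_ℓ`. -/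
theorem stmt10 (d m : ℕ) (w ζ : Fin d → ℂ) :
    let S : MvPolynomial (Fin d) ℂ := ∑ k, C (conj (w k)) * X k
    let coef : ℂ := 1 / (((m + d : ℕ) : ℂ) * (m.factorial : ℂ))
    let ratio : ℂ := ((m + d : ℕ) : ℂ) / ((m + 1 : ℕ) : ℂ)
    let comp : Fin d → MvPolynomial (Fin d) ℂ := fun j =>
      C coef * S ^ m * (C ratio * S * C (ζ j) - X j * C (∑ i, conj (w i) * ζ i))
    (∀ j, (comp j).IsHomogeneous (m + 1)) ∧
    (∑ j, (pderiv j (comp j) : MvPolynomial (Fin d) ℂ)) = 0 ∧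
    ∀ f : Fin d → MvPolynomial (Fin d) ℂ, (∀ j, (f j).IsHomogeneous (m + 1)) →
      (∑ j, (pderiv j (f j) : MvPolynomial (Fin d) ℂ)) = 0 →
      (∑ j, fock d (f j) (comp j)) = ∑ j, eval w (f j) * conj (ζ j) := by
  intro S coef ratio comp
  have hcomp : comp = kernelField (coef * ratio) coef m w ζ := funext fun j => by
    simp only [comp, S, kernelField, innerPoly, map_mul]
    ring
  rw [hcomp]
  refine ⟨isHomogeneous_kernelField _ _ m w ζ, ?_, fun f hf hdiv => ?_⟩
  · have hbalance : coef * ratio * (m + 1) - coef * (d + m) = 0 := by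
      simp only [coef, ratio]
      field_simp
      push_cast
      ring
    rw [sum_pderiv_kernelField, hbalance, zero_mul, map_zero, zero_mul]
  · rcases Nat.eq_zero_or_pos d with rfl | hd
    · simp
    have hscale : conj (coef * ratio) * (m + 1).factorial = 1 := by
      have : ((m + d : ℕ) : ℂ) ≠ 0 := by exact_mod_cast (by omega : m + d ≠ 0)
      have : (m.factorial : ℂ) ≠ 0 := by exact_mod_cast m.factorial_ne_zero
      simp only [coef, ratio, map_mul, map_div₀, map_one, Complex.conj_natCast,
        Nat.factorial_succ]
      field_simp
      push_cast
      ring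
    rw [sum_fock_kernelField _ _ m w ζ hf hdiv, hscale, one_mul]
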